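/- (Resummation of the dressed phase.) Let 0 < q < 1, set γ = −log q, and let u be complex with |Im u| < γ. Then Γ_{q⁴}(1 + iu/(2γ)) · Γ_{q⁴}(1/2 − iu/(2γ)) / ( Γ_{q⁴}(1 − iu/(2γ)) · Γ_{q⁴}(1/2 + iu/(2γ)) ) = exp( Σ_{n=1}^∞ ( q^{2n} / ( n (1 + q^{2n}) ) ) ( e^{2 i n u} − e^{−2 i n u} ) ), where all four q⁴-gamma values are nonzero and the series converges absolutely. -/

import Mathlib

open Complex

/-- The infinite q-Pochhammer symbol `(a; q) = ∏_{n=0}^∞ (1 - a qⁿ)`. -/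
noncomputable def qPoch (a : ℂ) (q : ℝ) : ℂ := ∏' n : ℕ, (1 - a * (q : ℂ) ^ n)

/-- `q^x = exp(x log q)` for the positive real `q`. -/
noncomputable def qpow (q : ℝ) (x : ℂ) : ℂ := Complex.exp (x * (Real.log q : ℂ))

/-- The q-gamma function `Γ_q(x) = (1-q)^{1-x} (q;q)/(q^x;q)`. -/
noncomputable def qGamma (q : ℝ) (x : ℂ) : ℂ :=
  Complex.exp ((1 - x) * (Real.log (1 - q) : ℂ)) * qPoch (q : ℂ) q / qPoch (qpow q x) q

/-!
For `‖a‖ < 1` and `|Q| < 1`, expanding each factor as `log (1 - a Qᵏ) = -∑ₙ (a Qᵏ)ⁿ / n` and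
summing the geometric series in `k` first (the double series converges absolutely) gives
`(a; Q) = exp (-∑ₙ aⁿ / (n (1 - Qⁿ)))`. For `Q = q⁴ = e^{-4γ}` the four arguments `Q^x` are
`q⁴ e^{∓2iu}` and `q² e^{±2iu}`, all in the unit disc exactly because `|Im u| < γ`. The factors
`(1 - Q)^{1-x}` and `(Q; Q)` cancel in the ratio because the arguments of the numerator and of
the denominator have the same sum, and the four logarithmic series combine termwise through
`1 - q⁴ⁿ = (1 - q²ⁿ)(1 + q²ⁿ)`.
-/

noncomputable def qPochLogSeries (Q : ℝ) (a : ℂ) : ℂ := ∑' n : ℕ, a ^ n / (n * (1 - (Q : ℂ) ^ n))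

lemma one_sub_ne_zero_of_norm_lt_one {z : ℂ} (hz : ‖z‖ < 1) : 1 - z ≠ 0 :=
  sub_ne_zero.mpr fun h => by simp [← h] at hz

section Pochhammer

variable {Q : ℝ} {a : ℂ}

lemma norm_ofReal_pow_lt_one (hQ : |Q| < 1) {n : ℕ} (hn : n ≠ 0) : ‖(Q : ℂ) ^ n‖ < 1 := by
  simpa using pow_lt_one₀ (abs_nonneg Q) hQ hn

lemma norm_mul_ofReal_pow_lt_one (hQ : |Q| < 1) (ha : ‖a‖ < 1) (k : ℕ) :
    ‖a * (Q : ℂ) ^ k‖ < 1 := by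
  rw [norm_mul, norm_pow, norm_real, Real.norm_eq_abs]
  exact mul_lt_one_of_nonneg_of_lt_one_left (norm_nonneg a) ha
    (pow_le_one₀ (abs_nonneg Q) hQ.le)

lemma summable_mul_ofReal_pow_pow_div (hQ : |Q| < 1) (ha : ‖a‖ < 1) :
    Summable fun p : ℕ × ℕ => (a * (Q : ℂ) ^ p.2) ^ p.1 / p.1 := by
  refine Summable.of_norm_bounded (g := fun p : ℕ × ℕ => ‖a‖ ^ p.1 * |Q| ^ p.2)
    ((summable_geometric_of_lt_one (norm_nonneg a) ha).mul_of_nonneg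
      (summable_geometric_of_lt_one (abs_nonneg Q) hQ) (fun _ => by positivity)
      (fun _ => by positivity)) ?_
  rintro ⟨n, k⟩
  rcases n.eq_zero_or_pos with rfl | hn
  · simp
  calc ‖(a * (Q : ℂ) ^ k) ^ n / n‖ ≤ ‖(a * (Q : ℂ) ^ k) ^ n‖ := by
        rw [norm_div, norm_natCast]
        exact div_le_self (norm_nonneg _) (by exact_mod_cast hn)
    _ = ‖a‖ ^ n * (|Q| ^ k) ^ n := by simp [mul_pow]
    _ ≤ ‖a‖ ^ n * |Q| ^ k := by
        gcongr
        exact pow_le_of_le_one (by positivity) (pow_le_one₀ (abs_nonneg Q) hQ.le) hn.ne'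

lemma hasSum_mul_ofReal_pow_pow_div (hQ : |Q| < 1) (n : ℕ) :
    HasSum (fun k : ℕ => (a * (Q : ℂ) ^ k) ^ n / n) (a ^ n / (n * (1 - (Q : ℂ) ^ n))) := by
  rcases n.eq_zero_or_pos with rfl | hn
  · simp
  have hQn := norm_ofReal_pow_lt_one hQ hn.ne'
  have hterm (k : ℕ) : (a * (Q : ℂ) ^ k) ^ n / n = a ^ n / n * ((Q : ℂ) ^ n) ^ k := by
    rw [mul_pow, ← pow_mul, ← pow_mul, mul_comm k n]
    ring
  have := one_sub_ne_zero_of_norm_lt_one hQn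
  rw [funext hterm, div_mul_eq_div_div, div_eq_mul_inv _ (1 - _)]
  exact (hasSum_geometric_of_norm_lt_one hQn).mul_left _

lemma hasSum_qPochLogSeries (hQ : |Q| < 1) (ha : ‖a‖ < 1) :
    HasSum (fun n : ℕ => a ^ n / (n * (1 - (Q : ℂ) ^ n))) (qPochLogSeries Q a) :=
  ((summable_mul_ofReal_pow_pow_div hQ ha).hasSum.prod_fiberwise
    fun n => hasSum_mul_ofReal_pow_pow_div hQ n).summable.hasSum

lemma hasSum_log_one_sub_mul_ofReal_pow (hQ : |Q| < 1) (ha : ‖a‖ < 1) :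
    HasSum (fun k : ℕ => log (1 - a * (Q : ℂ) ^ k)) (-qPochLogSeries Q a) := by
  have h := (summable_mul_ofReal_pow_pow_div hQ ha).hasSum
  have hcols := h.prod_fiberwise fun n => hasSum_mul_ofReal_pow_pow_div hQ n
  have hrows : HasSum (fun k : ℕ => -log (1 - a * (Q : ℂ) ^ k)) _ :=
    ((Equiv.prodComm ℕ ℕ).hasSum_iff.mpr h).prod_fiberwise fun k => by
      simp only [Function.comp_def, Equiv.prodComm_apply, Prod.swap_prod_mk]
      exact hasSum_taylorSeries_neg_log (norm_mul_ofReal_pow_lt_one hQ ha k)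
  rw [qPochLogSeries, hcols.tsum_eq]
  simpa only [neg_neg] using hrows.neg

lemma qPoch_eq_exp_neg_qPochLogSeries (hQ : |Q| < 1) (ha : ‖a‖ < 1) :
    qPoch a Q = exp (-qPochLogSeries Q a) :=
  (hasProd_of_hasSum_log (fun k => one_sub_ne_zero_of_norm_lt_one
    (norm_mul_ofReal_pow_lt_one hQ ha k)) (hasSum_log_one_sub_mul_ofReal_pow hQ ha)).tprod_eq

lemma qPoch_ne_zero (hQ : |Q| < 1) (ha : ‖a‖ < 1) : qPoch a Q ≠ 0 := by
  rw [qPoch_eq_exp_neg_qPochLogSeries hQ ha]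
  exact exp_ne_zero _

end Pochhammer

section QGamma

variable {Q : ℝ}

lemma qpow_add (x y : ℂ) : qpow Q (x + y) = qpow Q x * qpow Q y := by
  rw [qpow, qpow, qpow, add_mul, exp_add]

lemma qpow_sub (x y : ℂ) : qpow Q (x - y) = qpow Q x * (qpow Q y)⁻¹ := by
  rw [qpow, qpow, qpow, sub_mul, exp_sub, div_eq_mul_inv]

lemma qpow_one (hQ : 0 < Q) : qpow Q 1 = Q := by
  rw [qpow, one_mul, ← ofReal_exp, Real.exp_log hQ]

lemma qpow_sq_one_half (hQ : 0 < Q) : qpow (Q ^ 2) (1 / 2) = Q := by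
  rw [qpow, Real.log_pow]
  push_cast
  rw [show (1 / 2 : ℂ) * (2 * Real.log Q) = (Real.log Q : ℝ) by ring, ← ofReal_exp,
    Real.exp_log hQ]

lemma norm_qpow_lt_one (hQ0 : 0 < Q) (hQ1 : Q < 1) {x : ℂ} (hx : 0 < x.re) :
    ‖qpow Q x‖ < 1 := by
  rw [qpow, norm_exp, Real.exp_lt_one_iff]
  simpa using mul_neg_of_pos_of_neg hx (Real.log_neg hQ0 hQ1)

lemma qGamma_eq_qPoch_mul_exp (hQ0 : 0 < Q) (hQ1 : Q < 1) {x : ℂ} (hx : 0 < x.re) :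
    qGamma Q x =
      qPoch Q Q * exp ((1 - x) * Real.log (1 - Q) + qPochLogSeries Q (qpow Q x)) := by
  rw [qGamma, qPoch_eq_exp_neg_qPochLogSeries (abs_lt.mpr ⟨by linarith, hQ1⟩)
    (norm_qpow_lt_one hQ0 hQ1 hx), div_eq_mul_inv, ← exp_neg, neg_neg, exp_add]
  ring

lemma qPoch_self_ne_zero (hQ0 : 0 < Q) (hQ1 : Q < 1) : qPoch Q Q ≠ 0 := by
  have hQ : |Q| < 1 := abs_lt.mpr ⟨by linarith, hQ1⟩
  exact qPoch_ne_zero hQ (by rwa [norm_real, Real.norm_eq_abs])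

lemma qGamma_ne_zero (hQ0 : 0 < Q) (hQ1 : Q < 1) {x : ℂ} (hx : 0 < x.re) : qGamma Q x ≠ 0 := by
  rw [qGamma_eq_qPoch_mul_exp hQ0 hQ1 hx]
  exact mul_ne_zero (qPoch_self_ne_zero hQ0 hQ1) (exp_ne_zero _)

lemma qGamma_mul_qGamma_div_qGamma_mul_qGamma (hQ0 : 0 < Q) (hQ1 : Q < 1) {x₁ x₂ x₃ x₄ : ℂ}
    (h₁ : 0 < x₁.re) (h₂ : 0 < x₂.re) (h₃ : 0 < x₃.re) (h₄ : 0 < x₄.re)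
    (hx : x₁ + x₂ = x₃ + x₄) :
    qGamma Q x₁ * qGamma Q x₂ / (qGamma Q x₃ * qGamma Q x₄) =
      exp (qPochLogSeries Q (qpow Q x₁) + qPochLogSeries Q (qpow Q x₂) -
        qPochLogSeries Q (qpow Q x₃) - qPochLogSeries Q (qpow Q x₄)) := by
  have hP := qPoch_self_ne_zero hQ0 hQ1
  have hcancel (s t r v : ℂ) : qPoch Q Q * exp s * (qPoch Q Q * exp t) /
      (qPoch Q Q * exp r * (qPoch Q Q * exp v)) = exp (s + t - r - v) := by
    rw [exp_sub, exp_sub, exp_add]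
    field_simp
  rw [qGamma_eq_qPoch_mul_exp hQ0 hQ1 h₁, qGamma_eq_qPoch_mul_exp hQ0 hQ1 h₂,
    qGamma_eq_qPoch_mul_exp hQ0 hQ1 h₃, qGamma_eq_qPoch_mul_exp hQ0 hQ1 h₄, hcancel]
  congr 1
  linear_combination (-(Real.log (1 - Q) : ℂ)) * hx

end QGamma

lemma hasSum_qPochLogSeries_sq_combination {w : ℝ} {ζ : ℂ} (hw : |w| < 1)
    (hζ : ‖(w : ℂ) * ζ‖ < 1) (hζinv : ‖(w : ℂ) * ζ⁻¹‖ < 1) :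
    HasSum (fun n : ℕ => (w : ℂ) ^ (n + 1) / (((n : ℂ) + 1) * (1 + (w : ℂ) ^ (n + 1))) *
        (ζ⁻¹ ^ (n + 1) - ζ ^ (n + 1)))
      (qPochLogSeries (w ^ 2) ((w : ℂ) ^ 2 * ζ) + qPochLogSeries (w ^ 2) (w * ζ⁻¹) -
        qPochLogSeries (w ^ 2) ((w : ℂ) ^ 2 * ζ⁻¹) - qPochLogSeries (w ^ 2) (w * ζ)) := by
  have hw2 : |w ^ 2| < 1 := by
    rw [abs_pow]
    exact pow_lt_one₀ (abs_nonneg w) hw two_ne_zero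
  have hsq {z : ℂ} (hz : ‖(w : ℂ) * z‖ < 1) : ‖(w : ℂ) ^ 2 * z‖ < 1 := by
    rw [pow_two, mul_assoc, norm_mul, norm_real, Real.norm_eq_abs]
    exact mul_lt_one_of_nonneg_of_lt_one_left (abs_nonneg w) hw hz.le
  suffices h : HasSum (fun m : ℕ => (w : ℂ) ^ m / (m * (1 + (w : ℂ) ^ m)) * (ζ⁻¹ ^ m - ζ ^ m))
      (qPochLogSeries (w ^ 2) ((w : ℂ) ^ 2 * ζ) + qPochLogSeries (w ^ 2) (w * ζ⁻¹) -
        qPochLogSeries (w ^ 2) ((w : ℂ) ^ 2 * ζ⁻¹) - qPochLogSeries (w ^ 2) (w * ζ)) by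
    simpa using (hasSum_nat_add_iff' 1).mpr h
  refine ((((hasSum_qPochLogSeries hw2 (hsq hζ)).add (hasSum_qPochLogSeries hw2 hζinv)).sub
    (hasSum_qPochLogSeries hw2 (hsq hζinv))).sub (hasSum_qPochLogSeries hw2 hζ)).congr_fun
    fun m => ?_
  rcases m.eq_zero_or_pos with rfl | hm
  · simp
  have hwm := norm_ofReal_pow_lt_one hw hm.ne'
  have h1 := one_sub_ne_zero_of_norm_lt_one hwm
  have h2 : 1 + (w : ℂ) ^ m ≠ 0 := by
    simpa using one_sub_ne_zero_of_norm_lt_one (z := -(w : ℂ) ^ m) (by simpa using hwm)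
  push_cast
  rw [← pow_mul, mul_comm 2 m, pow_mul,
    show (1 : ℂ) - ((w : ℂ) ^ m) ^ 2 = (1 - (w : ℂ) ^ m) * (1 + (w : ℂ) ^ m) by ring]
  field_simp
  ring

lemma re_pos_of_abs_re_lt_half {c v : ℂ} (hc : 1 / 2 ≤ c.re) (hv : |v.re| < 1 / 2) :
    0 < (c + v).re ∧ 0 < (c - v).re := by
  obtain ⟨hv₁, hv₂⟩ := abs_lt.mp hv
  constructor <;> simp only [add_re, sub_re] <;> linarith

lemma hasSum_qPochLogSeries_qpow_combination {w : ℝ} (hw0 : 0 < w) (hw1 : w < 1) {v : ℂ}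
    (hv : |v.re| < 1 / 2) :
    HasSum (fun n : ℕ => (w : ℂ) ^ (n + 1) / (((n : ℂ) + 1) * (1 + (w : ℂ) ^ (n + 1))) *
        ((qpow (w ^ 2) v)⁻¹ ^ (n + 1) - qpow (w ^ 2) v ^ (n + 1)))
      (qPochLogSeries (w ^ 2) (qpow (w ^ 2) (1 + v)) +
        qPochLogSeries (w ^ 2) (qpow (w ^ 2) (1 / 2 - v)) -
        qPochLogSeries (w ^ 2) (qpow (w ^ 2) (1 - v)) -
        qPochLogSeries (w ^ 2) (qpow (w ^ 2) (1 / 2 + v))) := by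
  have hw2 : 0 < w ^ 2 := by positivity
  have hw21 : w ^ 2 < 1 := pow_lt_one₀ hw0.le hw1 two_ne_zero
  obtain ⟨hplus, hminus⟩ := re_pos_of_abs_re_lt_half (c := 1 / 2) (by norm_num) hv
  have hζ := norm_qpow_lt_one hw2 hw21 hplus
  have hζinv := norm_qpow_lt_one hw2 hw21 hminus
  simp only [qpow_add, qpow_sub, qpow_one hw2, qpow_sq_one_half hw0] at hζ hζinv ⊢
  push_cast
  exact hasSum_qPochLogSeries_sq_combination (abs_lt.mpr ⟨by linarith, hw1⟩) hζ hζinv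

lemma abs_re_I_mul_div_lt_half {γ : ℝ} {u : ℂ} (hu : |u.im| < γ) :
    |(I * u / (2 * γ)).re| < 1 / 2 := by
  have hγ : 0 < 2 * γ := by linarith [abs_nonneg u.im]
  rw [show (2 * γ : ℂ) = ((2 * γ : ℝ) : ℂ) by push_cast; ring, div_ofReal_re]
  simp only [mul_re, I_re, I_im, zero_mul, one_mul, zero_sub, abs_div, abs_neg,
    abs_of_pos hγ, div_lt_iff₀ hγ]
  linarith

lemma qpow_I_mul_div {Q γ : ℝ} (hQ : Real.log Q = -4 * γ) (hγ : γ ≠ 0) (u : ℂ) :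
    qpow Q (I * u / (2 * γ)) = exp (-2 * I * u) := by
  have hγ' : (γ : ℂ) ≠ 0 := ofReal_ne_zero.mpr hγ
  rw [qpow, hQ]
  congr 1
  push_cast
  field_simp
  ring

theorem dressed_phase_resummation (q γ : ℝ) (hq0 : 0 < q) (hq1 : q < 1)
    (hγ : γ = -Real.log q) (u : ℂ) (hu : |u.im| < γ) :
    qGamma (q ^ 4) (1 + Complex.I * u / (2 * γ)) ≠ 0 ∧
    qGamma (q ^ 4) (1 / 2 - Complex.I * u / (2 * γ)) ≠ 0 ∧
    qGamma (q ^ 4) (1 - Complex.I * u / (2 * γ)) ≠ 0 ∧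
    qGamma (q ^ 4) (1 / 2 + Complex.I * u / (2 * γ)) ≠ 0 ∧
    Summable (fun n : ℕ =>
      ‖((q : ℂ) ^ (2 * (n + 1)) / (((n : ℂ) + 1) * (1 + (q : ℂ) ^ (2 * (n + 1))))) *
        (Complex.exp (2 * Complex.I * ((n : ℂ) + 1) * u) -
          Complex.exp (-2 * Complex.I * ((n : ℂ) + 1) * u))‖) ∧
    qGamma (q ^ 4) (1 + Complex.I * u / (2 * γ)) *
        qGamma (q ^ 4) (1 / 2 - Complex.I * u / (2 * γ)) /
        (qGamma (q ^ 4) (1 - Complex.I * u / (2 * γ)) *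
          qGamma (q ^ 4) (1 / 2 + Complex.I * u / (2 * γ))) =
      Complex.exp (∑' n : ℕ,
        ((q : ℂ) ^ (2 * (n + 1)) / (((n : ℂ) + 1) * (1 + (q : ℂ) ^ (2 * (n + 1))))) *
          (Complex.exp (2 * Complex.I * ((n : ℂ) + 1) * u) -
            Complex.exp (-2 * Complex.I * ((n : ℂ) + 1) * u))) := by
  have hγ0 : 0 < γ := (abs_nonneg _).trans_lt hu
  set w : ℝ := q ^ 2 with hw
  have hw0 : 0 < w := by positivity
  have hw1 : w < 1 := pow_lt_one₀ hq0.le hq1 two_ne_zero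
  have hw2 : 0 < w ^ 2 := by positivity
  have hw21 : w ^ 2 < 1 := pow_lt_one₀ hw0.le hw1 two_ne_zero
  have hv := abs_re_I_mul_div_lt_half hu
  obtain ⟨h₁, h₃⟩ := re_pos_of_abs_re_lt_half (c := 1) (by norm_num) hv
  obtain ⟨h₄, h₂⟩ := re_pos_of_abs_re_lt_half (c := 1 / 2) (by norm_num) hv
  have hlog : Real.log (w ^ 2) = -4 * γ := by
    rw [hw, ← pow_mul, Real.log_pow, hγ]
    push_cast
    ring
  have hS := hasSum_qPochLogSeries_qpow_combination hw0 hw1 hv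
  rw [qpow_I_mul_div hlog hγ0.ne', ← exp_neg, show -(-2 * I * u) = 2 * I * u by ring] at hS
  have hpow (n : ℕ) : (q : ℂ) ^ (2 * (n + 1)) = (w : ℂ) ^ (n + 1) := by
    rw [hw, pow_mul]
    push_cast
    ring
  have hexp (c : ℂ) (n : ℕ) : exp (c * I * ((n : ℂ) + 1) * u) = exp (c * I * u) ^ (n + 1) := by
    rw [← exp_nat_mul]
    push_cast
    ring_nf
  simp only [show q ^ 4 = w ^ 2 by ring, hpow, hexp]
  refine ⟨qGamma_ne_zero hw2 hw21 h₁, qGamma_ne_zero hw2 hw21 h₂, qGamma_ne_zero hw2 hw21 h₃,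
    qGamma_ne_zero hw2 hw21 h₄, summable_norm_iff.mpr hS.summable, ?_⟩
  rw [qGamma_mul_qGamma_div_qGamma_mul_qGamma hw2 hw21 h₁ h₂ h₃ h₄ (by ring), hS.tsum_eq]
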